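/- arXiv:0810.4530 — 2 statements merged into one kernel-verified Lean document; each statement's English description precedes it below -/
import Mathlib

section
/- For a ∈ ℝ, a ≠ 0, the Lie algebra (ℝ^8, μ_a) with bracket μ_a(e_1,e_j) = e_{j+1} for j = 2,…,7, μ_a(e_2,e_3) = a e_7, μ_a(e_2,e_4) = a e_8 is isomorphic to (ℝ^8, μ_1), via the diagonal linear map diag(1, 1/a, 1/a, 1/a, 1/a, 1/a, 1/a, 1/a). -/
noncomputable section

def e (k : ℕ) : Fin 8 → ℝ := fun m => if (m : ℕ) = k then 1 else 0

/-- Structure constants of `μ_a` (class `A₄`) for `i < j` (0-based indices):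
`μ_a(e₁,e_j) = e_{j+1}` for `j = 2,…,7`, `μ_a(e₂,e₃) = a e₇`, `μ_a(e₂,e₄) = a e₈`. -/
def cplus (a : ℝ) (i j : ℕ) : Fin 8 → ℝ :=
  if i = 0 ∧ 1 ≤ j ∧ j ≤ 6 then e (j + 1)
  else if i = 1 ∧ j = 2 then a • e 6
  else if i = 1 ∧ j = 3 then a • e 7
  else 0

def cst (a : ℝ) (i j : ℕ) : Fin 8 → ℝ :=
  if i < j then cplus a i j else if j < i then -cplus a j i else 0

def mu (a : ℝ) (x y : Fin 8 → ℝ) : Fin 8 → ℝ :=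
  fun k => ∑ i : Fin 8, ∑ j : Fin 8, x i * y j * cst a (i : ℕ) (j : ℕ) k

/-- The diagonal map `g_a = diag(1, 1/a, 1/a, 1/a, 1/a, 1/a, 1/a, 1/a)`. -/
def gmap (a : ℝ) (x : Fin 8 → ℝ) : Fin 8 → ℝ :=
  fun k => if (k : ℕ) = 0 then x k else (1 / a) * x k

theorem mu_eq (a : ℝ) (x y : Fin 8 → ℝ) :
    mu a x y = ![0, 0, x 0 * y 1 - x 1 * y 0, x 0 * y 2 - x 2 * y 0, x 0 * y 3 - x 3 * y 0,
      x 0 * y 4 - x 4 * y 0, x 0 * y 5 - x 5 * y 0 + a * (x 1 * y 2 - x 2 * y 1),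
      x 0 * y 6 - x 6 * y 0 + a * (x 1 * y 3 - x 3 * y 1)] := by
  funext k
  fin_cases k <;> simp [mu, Fin.sum_univ_eight, cst, cplus, e] <;> ring

theorem gmap_gmap (a b : ℝ) (x : Fin 8 → ℝ) : gmap a (gmap b x) = gmap (a * b) x := by
  funext k
  by_cases hk : (k : ℕ) = 0 <;> simp [gmap, hk]
  ring

theorem gmap_one (x : Fin 8 → ℝ) : gmap 1 x = x := by
  funext k
  simp [gmap]

theorem gmap_bijective {a : ℝ} (ha : a ≠ 0) : Function.Bijective (gmap a) :=
  Function.bijective_iff_has_inverse.mpr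
    ⟨gmap a⁻¹, fun x => by simp [gmap_gmap, ha, gmap_one],
      fun x => by simp [gmap_gmap, ha, gmap_one]⟩

/- `gmap a` fixes `e₁` and scales the ideal spanned by `e₂, …, e₈` by `1/a`: the brackets
`[e₁, e_j]` are scaled once, so they are preserved, while `[e₂, e₃]` and `[e₂, e₄]` are scaled
twice, which the structure constant `a` of `μ_a` compensates. -/
theorem gmap_mu_one {a : ℝ} (ha : a ≠ 0) (x y : Fin 8 → ℝ) :
    gmap a (mu 1 x y) = mu a (gmap a x) (gmap a y) := by
  funext k
  fin_cases k <;> simp [mu_eq, gmap] <;> field_simp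

/-- For `a ≠ 0`, `(ℝ⁸, μ_a)` is isomorphic to `(ℝ⁸, μ₁)` via `diag(1, 1/a, …, 1/a)`. -/
theorem stmt10 (a : ℝ) (ha : a ≠ 0) :
    Function.Bijective (gmap a) ∧
    ∀ x y : Fin 8 → ℝ, gmap a (mu 1 x y) = mu a (gmap a x) (gmap a y) :=
  ⟨gmap_bijective ha, gmap_mu_one ha⟩

end
end

section
/- Let U be the 8×8 symmetric matrix with rows [3,0,1,1,1,1,0,1], [0,3,0,1,1,1,1,−1], [1,0,3,0,1,1,0,1], [1,1,0,3,0,1,0,0], [1,1,1,0,3,0,1,0], [1,1,1,1,0,3,−1,1], [0,1,0,0,1,−1,3,1], [1,−1,1,0,0,1,1,3]. Then there exists a vector v ∈ ℝ^8 with all coordinates strictly positive such that U v = (1,1,1,1,1,1,1,1)^T; for example v = (3/62, −7/186 + t, 29/186, 20/93, 13/93, 32/93 − t, 77/186 − t, t) works for any t with 7/186 < t < 64/186. -/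
noncomputable section

/-- The Gram matrix `U = YᵀY` arising from the root vectors of `d₁(8)`. -/
def U : Matrix (Fin 8) (Fin 8) ℝ :=
  !![3,0,1,1,1,1,0,1;
     0,3,0,1,1,1,1,-1;
     1,0,3,0,1,1,0,1;
     1,1,0,3,0,1,0,0;
     1,1,1,0,3,0,1,0;
     1,1,1,1,0,3,-1,1;
     0,1,0,0,1,-1,3,1;
     1,-1,1,0,0,1,1,3]

/-- The explicit family of solutions. -/
def v (t : ℝ) : Fin 8 → ℝ :=
  ![3/62, -7/186 + t, 29/186, 20/93, 13/93, 32/93 - t, 77/186 - t, t]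


section Aux
variable {α : Type*}
lemma val0 (a b c d e f g h : α) : ![a,b,c,d,e,f,g,h] 0 = a := rfl
lemma val1 (a b c d e f g h : α) : ![a,b,c,d,e,f,g,h] 1 = b := rfl
lemma val2 (a b c d e f g h : α) : ![a,b,c,d,e,f,g,h] 2 = c := rfl
lemma val3 (a b c d e f g h : α) : ![a,b,c,d,e,f,g,h] 3 = d := rfl
lemma val4 (a b c d e f g h : α) : ![a,b,c,d,e,f,g,h] 4 = e := rfl
lemma val5 (a b c d e f g h : α) : ![a,b,c,d,e,f,g,h] 5 = f := rfl
lemma val6 (a b c d e f g h : α) : ![a,b,c,d,e,f,g,h] 6 = g := rfl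
lemma val7 (a b c d e f g h : α) : ![a,b,c,d,e,f,g,h] 7 = h := rfl
lemma valmk0 (a b c d e f g h : α) (hk : (0:ℕ) < 8) : ![a,b,c,d,e,f,g,h] ⟨0,hk⟩ = a := rfl
lemma valmk1 (a b c d e f g h : α) (hk : (1:ℕ) < 8) : ![a,b,c,d,e,f,g,h] ⟨1,hk⟩ = b := rfl
lemma valmk2 (a b c d e f g h : α) (hk : (2:ℕ) < 8) : ![a,b,c,d,e,f,g,h] ⟨2,hk⟩ = c := rfl
lemma valmk3 (a b c d e f g h : α) (hk : (3:ℕ) < 8) : ![a,b,c,d,e,f,g,h] ⟨3,hk⟩ = d := rfl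
lemma valmk4 (a b c d e f g h : α) (hk : (4:ℕ) < 8) : ![a,b,c,d,e,f,g,h] ⟨4,hk⟩ = e := rfl
lemma valmk5 (a b c d e f g h : α) (hk : (5:ℕ) < 8) : ![a,b,c,d,e,f,g,h] ⟨5,hk⟩ = f := rfl
lemma valmk6 (a b c d e f g h : α) (hk : (6:ℕ) < 8) : ![a,b,c,d,e,f,g,h] ⟨6,hk⟩ = g := rfl
lemma valmk7 (a b c d e f g h : α) (hk : (7:ℕ) < 8) : ![a,b,c,d,e,f,g,h] ⟨7,hk⟩ = h := rfl
end Aux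

lemma key (t : ℝ) (h1 : 7 / 186 < t) (h2 : t < 64 / 186) :
    (∀ i, 0 < v t i) ∧ U.mulVec (v t) = (fun _ => 1) := by
  constructor
  · intro i
    fin_cases i <;>
      simp only [v, val0, val1, val2, val3, val4, val5, val6, val7,
        valmk0, valmk1, valmk2, valmk3, valmk4, valmk5, valmk6, valmk7] <;> linarith
  · funext i
    fin_cases i <;>
      · simp only [U, v, Matrix.mulVec, dotProduct, Fin.sum_univ_eight, Matrix.of_apply,
          val0, val1, val2, val3, val4, val5, val6, val7,
          valmk0, valmk1, valmk2, valmk3, valmk4, valmk5, valmk6, valmk7]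
        ring

/-- `U v = [1]₈` admits a strictly positive solution; e.g. `v t` works for any
`7/186 < t < 64/186`. -/
theorem stmt14 :
    (∀ t : ℝ, 7 / 186 < t → t < 64 / 186 →
      (∀ i, 0 < v t i) ∧ U.mulVec (v t) = (fun _ => 1)) ∧
    ∃ w : Fin 8 → ℝ, (∀ i, 0 < w i) ∧ U.mulVec w = (fun _ => 1) := by
  exact ⟨key, v (1/6), (key (1/6) (by norm_num) (by norm_num)).1,
    (key (1/6) (by norm_num) (by norm_num)).2⟩

end
end
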